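/- Let a, b, d ∈ ℝ with (a − d)² + 4b² ≠ 0, set η = √((a − d)² + 4b²), and let A be the complex 2 × 2 matrix with real entries [[a, b], [b, d]]. Define α₁(t) to be the (1,1) entry of exp(−itA). Then for all t ∈ ℝ: |α₁(t)|² = 1 − (4b²/η²) sin²(ηt/2); in particular |α₁(t)|² + |α₂(t)|² = 1, where α₂(t) is the (2,1) entry of exp(−itA). -/

import Mathlib

/-!
Write `A = ((a + d) / 2) • 1 + B` with `B = !![(a - d) / 2, b; b, -(a - d) / 2]`. The scalar part
only contributes a phase of modulus one, and `B ^ 2 = (η / 2) ^ 2 • 1`, so splitting the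
exponential series into even and odd terms gives
`exp (-i t B) = cos (η t / 2) • 1 - (2 i sin (η t / 2) / η) • B`.
The moduli of the first column are then `cos² + ((a - d) / η)² sin²` and `(2 b / η)² sin²`,
which add up to `1` because `η² = (a - d)² + 4 b²`.
-/

open Matrix Real Complex

namespace NormedSpace

variable {𝔸 : Type*} [Ring 𝔸] [Algebra ℂ 𝔸] [TopologicalSpace 𝔸] [IsTopologicalRing 𝔸]
  [ContinuousSMul ℂ 𝔸] [T2Space 𝔸]

theorem exp_eq_cosh_smul_one_add_sinh_div_smul {X : 𝔸} {s : ℂ} (hs : s ≠ 0)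
    (hX : X ^ 2 = s ^ 2 • (1 : 𝔸)) :
    exp X = cosh s • (1 : 𝔸) + (sinh s / s) • X := by
  have even_pow (k : ℕ) : X ^ (2 * k) = s ^ (2 * k) • (1 : 𝔸) := by
    rw [pow_mul, hX, smul_pow, one_pow, ← pow_mul]
  rw [exp_eq_tsum ℂ]
  refine HasSum.tsum_eq (HasSum.even_add_odd ?_ ?_)
  · convert (hasSum_cosh s).smul_const (1 : 𝔸) using 2 with k
    rw [even_pow, smul_smul, div_eq_inv_mul]
  · convert ((hasSum_sinh s).div_const s).smul_const X using 2 with k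
    rw [pow_succ, even_pow, smul_mul_assoc, one_mul, smul_smul, pow_succ]
    field_simp

theorem exp_neg_I_mul_smul_eq_cos_smul_one_sub_sin_div_smul {X : 𝔸} {ω : ℂ} (hω : ω ≠ 0)
    (hX : X ^ 2 = ω ^ 2 • (1 : 𝔸)) (t : ℂ) :
    exp ((-(I * t)) • X) =
      Complex.cos (ω * t) • (1 : 𝔸) - (I * (Complex.sin (ω * t) / ω)) • X := by
  rcases eq_or_ne t 0 with rfl | ht
  · simp
  have hs : ω * t * I ≠ 0 := by simp [hω, ht]
  rw [exp_eq_cosh_smul_one_add_sinh_div_smul (s := ω * t * I) hs, cosh_mul_I, sinh_mul_I,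
    smul_smul, sub_eq_add_neg, ← neg_smul]
  · congr 2
    field_simp
  · rw [smul_pow, hX, smul_smul]
    congr 1
    ring

end NormedSpace

namespace Matrix

theorem exp_smul_one_add {n : Type*} [Fintype n] [DecidableEq n] (z : ℂ) (X : Matrix n n ℂ) :
    NormedSpace.exp (z • (1 : Matrix n n ℂ) + X) = Complex.exp z • NormedSpace.exp X := by
  have exp_smul_one : NormedSpace.exp (z • (1 : Matrix n n ℂ)) = Complex.exp z • 1 := by
    rw [smul_one_eq_diagonal, exp_diagonal, Pi.exp_def, ← exp_eq_exp_ℂ, smul_one_eq_diagonal]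
  rw [exp_add_of_commute _ _ ((Commute.one_left X).smul_left z), exp_smul_one, smul_one_mul]

theorem symm_fin_two_eq_smul_one_add {K : Type*} [Field K] [NeZero (2 : K)] (a b d : K) :
    !![a, b; b, d] =
      ((a + d) / 2) • (1 : Matrix (Fin 2) (Fin 2) K) + !![(a - d) / 2, b; b, -((a - d) / 2)] := by
  ext i j
  fin_cases i <;> fin_cases j <;> simp <;> field_simp <;> ring

theorem traceless_symm_fin_two_sq {R : Type*} [CommRing R] (m b : R) :
    !![m, b; b, -m] ^ 2 = (m ^ 2 + b ^ 2) • (1 : Matrix (Fin 2) (Fin 2) R) := by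
  ext i j
  fin_cases i <;> fin_cases j <;> simp [sq] <;> ring

theorem exp_neg_I_mul_smul_symm_fin_two {a b d ω : ℂ} (hω0 : ω ≠ 0)
    (hω : ω ^ 2 = ((a - d) / 2) ^ 2 + b ^ 2) (t : ℂ) :
    NormedSpace.exp ((-(I * t)) • !![a, b; b, d]) =
      Complex.exp (-(I * t) * ((a + d) / 2)) •
        (Complex.cos (ω * t) • (1 : Matrix (Fin 2) (Fin 2) ℂ) -
          (I * (Complex.sin (ω * t) / ω)) • !![(a - d) / 2, b; b, -((a - d) / 2)]) := by
  rw [symm_fin_two_eq_smul_one_add, smul_add, smul_smul, exp_smul_one_add,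
    NormedSpace.exp_neg_I_mul_smul_eq_cos_smul_one_sub_sin_div_smul hω0
      (by rw [traceless_symm_fin_two_sq, hω])]

theorem sq_norm_exp_neg_I_mul_smul_symm_fin_two_apply {a b d ω : ℝ} (hω0 : ω ≠ 0)
    (hω : ω ^ 2 = ((a - d) / 2) ^ 2 + b ^ 2) (t : ℝ) :
    ‖NormedSpace.exp ((-(I * t)) • !![(a : ℂ), b; b, d]) 0 0‖ ^ 2 =
        Real.cos (ω * t) ^ 2 + ((a - d) / (2 * ω) * Real.sin (ω * t)) ^ 2 ∧
      ‖NormedSpace.exp ((-(I * t)) • !![(a : ℂ), b; b, d]) 1 0‖ ^ 2 =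
        (b / ω * Real.sin (ω * t)) ^ 2 := by
  have hphase : -(I * t) * ((a + d) / 2) = ((-(t * ((a + d) / 2)) : ℝ) : ℂ) * I := by
    push_cast; ring
  rw [exp_neg_I_mul_smul_symm_fin_two (ω := ω) (by exact_mod_cast hω0) (by exact_mod_cast hω),
    hphase]
  refine ⟨?_, ?_⟩ <;>
    simp only [smul_apply, sub_apply, smul_eq_mul, norm_mul, norm_exp_ofReal_mul_I, one_mul,
      one_apply_eq, one_apply_ne one_ne_zero, of_apply, cons_val', cons_val_zero, cons_val_one,
      cons_val_fin_one, mul_one, mul_zero, zero_sub]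
  · rw [show Complex.cos (ω * t) - I * (Complex.sin (ω * t) / ω) * ((a - d) / 2) =
        ((Real.cos (ω * t) : ℝ) : ℂ) + ((-((a - d) / (2 * ω) * Real.sin (ω * t)) : ℝ) : ℂ) * I by
        push_cast; ring,
      Complex.sq_norm, normSq_add_mul_I, neg_sq]
  · rw [show -(I * (Complex.sin (ω * t) / ω) * b) = ((-(b / ω * Real.sin (ω * t)) : ℝ) : ℂ) * I by
        push_cast; ring,
      norm_mul, norm_I, mul_one, norm_real, Real.norm_eq_abs, sq_abs, neg_sq]

end Matrix

/-- **Survival probability of a two-level system.**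
Let `a, b, d ∈ ℝ` with `(a−d)² + 4b² ≠ 0`, `η = √((a−d)² + 4b²)`, and let `A` be the
complex `2 × 2` matrix `[[a, b], [b, d]]`.  If `α₁ t` and `α₂ t` are the `(1,1)` and
`(2,1)` entries of `exp (−itA)`, then `|α₁ t|² = 1 − (4b²/η²) sin²(ηt/2)` and
`|α₁ t|² + |α₂ t|² = 1` for all `t`. -/
theorem two_level_survival_probability
    (a b d : ℝ) (hnz : (a - d) ^ 2 + 4 * b ^ 2 ≠ 0)
    (η : ℝ) (hη : η = Real.sqrt ((a - d) ^ 2 + 4 * b ^ 2))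
    (A : Matrix (Fin 2) (Fin 2) ℂ)
    (hA : A = !![(a : ℂ), (b : ℂ); (b : ℂ), (d : ℂ)])
    (α₁ α₂ : ℝ → ℂ)
    (hα₁ : ∀ t : ℝ, α₁ t = (NormedSpace.exp ((-(Complex.I * t)) • A)) 0 0)
    (hα₂ : ∀ t : ℝ, α₂ t = (NormedSpace.exp ((-(Complex.I * t)) • A)) 1 0) :
    ∀ t : ℝ,
      ‖α₁ t‖ ^ 2 = 1 - (4 * b ^ 2 / η ^ 2) * Real.sin (η * t / 2) ^ 2 ∧
      ‖α₁ t‖ ^ 2 + ‖α₂ t‖ ^ 2 = 1 := by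
  have hη0 : η ≠ 0 := by
    rw [hη]; positivity
  have hη2 : η ^ 2 = (a - d) ^ 2 + 4 * b ^ 2 := by
    rw [hη, Real.sq_sqrt (by positivity)]
  intro t
  obtain ⟨h₁, h₂⟩ := sq_norm_exp_neg_I_mul_smul_symm_fin_two_apply (a := a) (b := b) (d := d)
    (ω := η / 2) (by positivity) (by linear_combination hη2 / 4) t
  rw [hα₁, hα₂, hA, h₁, h₂, show η / 2 * t = η * t / 2 by ring]
  have hpyth := Real.sin_sq_add_cos_sq (η * t / 2)
  constructor
  · field_simp
    linear_combination η ^ 2 * hpyth - Real.sin (η * t / 2) ^ 2 * hη2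
  · field_simp
    linear_combination η ^ 2 * hpyth - Real.sin (η * t / 2) ^ 2 * hη2
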